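/- Let N be a zero-symmetric unital right near-ring that is regular and left morphic. Then N is unit-regular: for every a ∈ N there exists a unit u of N such that a = a·u·a. -/

import Mathlib

/-- A zero-symmetric unital right near-ring: an additive group (not necessarily
abelian) and a multiplicative monoid with `1 ≠ 0`, satisfying the right
distributive law, and zero-symmetric (`x * 0 = 0`). -/
class ZSNearRing (N : Type*) extends AddGroup N, Monoid N where
  right_distrib : ∀ x y z : N, (x + y) * z = x * z + y * z
  mul_zero : ∀ x : N, x * 0 = 0
  one_ne_zero : (1 : N) ≠ (0 : N)

namespace ZSNearRing

variable {N : Type*} [ZSNearRing N]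

/-- The set `Na = {n·a : n ∈ N}`. -/
def NSet (a : N) : Set N := {x | ∃ n : N, x = n * a}

/-- The left annihilator `(0 :ₗ a) = {x ∈ N : x·a = 0}`. -/
def lAnn (a : N) : Set N := {x | x * a = 0}

/-- `a` is left morphic if there is `b` with `Na = (0 :ₗ b)` and `Nb = (0 :ₗ a)`. -/
def IsLeftMorphic (a : N) : Prop := ∃ b : N, NSet a = lAnn b ∧ NSet b = lAnn a

end ZSNearRing

open ZSNearRing

/-!
Write `a = a x a` and let `b` witness that `a` is left morphic, so `Na = (0 :ₗ b)`,
`Nb = (0 :ₗ a)` (in particular `b a = 0`), and write `b = b y b`. The element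
`u = (x - x y b) + b` satisfies `u a = x a` and `u (y b) = b`. Hence `a u a = a x a = a`, and
`z u = 0` forces `z b = 0`, i.e. `z ∈ Na`, and `z x a = 0`, which for `z ∈ Na` means `z = 0`.
A left morphic element with zero left annihilator is a unit: its partner `c` lies in
`Nc = (0 :ₗ u) = 0`, so `Nu = (0 :ₗ 0) = N ∋ 1`.
-/

namespace ZSNearRing

variable {N : Type*} [ZSNearRing N]

protected lemma zero_mul (z : N) : 0 * z = 0 :=
  left_eq_add.mp <| by rw [← right_distrib 0 0 z, add_zero]

protected lemma neg_mul (x z : N) : -x * z = -(x * z) :=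
  eq_neg_of_add_eq_zero_right <| by rw [← right_distrib, add_neg_cancel, ZSNearRing.zero_mul]

protected lemma sub_mul (x y z : N) : (x - y) * z = x * z - y * z := by
  rw [sub_eq_add_neg, right_distrib, ZSNearRing.neg_mul, ← sub_eq_add_neg]

lemma mem_NSet_self (a : N) : a ∈ NSet a :=
  ⟨1, (one_mul a).symm⟩

lemma mul_eq_zero_of_NSet_eq_lAnn {a b : N} (h : NSet b = lAnn a) : b * a = 0 := by
  have hb := mem_NSet_self b
  rwa [h] at hb

lemma mul_eq_self_of_mem_NSet {a x z : N} (hx : a = a * x * a) (hz : z ∈ NSet a) :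
    z * (x * a) = z := by
  obtain ⟨n, rfl⟩ := hz
  rw [mul_assoc, ← mul_assoc a, ← hx]

lemma isUnit_of_isLeftMorphic {u : N} (hu : IsLeftMorphic u)
    (hann : ∀ z : N, z * u = 0 → z = 0) : IsUnit u := by
  obtain ⟨c, hNu, hNc⟩ := hu
  have hc : c = 0 := hann c (mul_eq_zero_of_NSet_eq_lAnn hNc)
  have h1 : (1 : N) ∈ NSet u := by
    rw [hNu, hc]
    exact ZSNearRing.mul_zero 1
  obtain ⟨v, hvu⟩ := h1
  have huv : u * v - 1 = 0 :=
    hann _ <| by rw [ZSNearRing.sub_mul, mul_assoc, ← hvu, mul_one, one_mul, sub_self]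
  exact isUnit_iff_exists.mpr ⟨v, sub_eq_zero.mp huv, hvu.symm⟩

lemma exists_mul_eq_and_mul_eq {a b x y : N} (hy : b = b * y * b)
    (hba : b * a = 0) : ∃ u : N, u * a = x * a ∧ u * (y * b) = b := by
  have hbyb : b * (y * b) = b := by rw [← mul_assoc, ← hy]
  refine ⟨x - x * (y * b) + b, ?_, ?_⟩
  · rw [right_distrib, ZSNearRing.sub_mul, hba, add_zero, mul_assoc, mul_assoc, hba,
      ZSNearRing.mul_zero, ZSNearRing.mul_zero, sub_zero]
  · rw [right_distrib, ZSNearRing.sub_mul, hbyb, mul_assoc x, mul_assoc y, hbyb, sub_self,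
      zero_add]

lemma eq_zero_of_mul_eq_zero {a b x y u : N} (hx : a = a * x * a) (hNa : NSet a = lAnn b)
    (hua : u * a = x * a) (huyb : u * (y * b) = b) {z : N} (hz : z * u = 0) : z = 0 := by
  have hzb : z ∈ NSet a := by
    rw [hNa]
    show z * b = 0
    rw [← huyb, ← mul_assoc, hz, ZSNearRing.zero_mul]
  rw [← mul_eq_self_of_mem_NSet hx hzb, ← hua, ← mul_assoc, hz, ZSNearRing.zero_mul]

end ZSNearRing

theorem stmt14 {N : Type*} [ZSNearRing N]
    (hreg : ∀ a : N, ∃ x : N, a = a * x * a)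
    (hmor : ∀ a : N, IsLeftMorphic a) :
    ∀ a : N, ∃ u : N, (∃ v : N, u * v = 1 ∧ v * u = 1) ∧ a = a * u * a := by
  intro a
  obtain ⟨x, hx⟩ := hreg a
  obtain ⟨b, hNa, hNb⟩ := hmor a
  obtain ⟨y, hy⟩ := hreg b
  obtain ⟨u, hua, huyb⟩ := exists_mul_eq_and_mul_eq hy (mul_eq_zero_of_NSet_eq_lAnn hNb)
  have hunit : IsUnit u :=
    isUnit_of_isLeftMorphic (hmor u) fun _ => eq_zero_of_mul_eq_zero hx hNa hua huyb
  refine ⟨u, isUnit_iff_exists.mp hunit, ?_⟩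
  rw [mul_assoc, hua, ← mul_assoc]
  exact hx
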